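/- arXiv:1703.07809 — 2 statements merged into one kernel-verified Lean document; each statement's English description precedes it below -/
import Mathlib

section
/- Let S: (0,∞) → (0,∞) be a C² function with S' < 0 on (0,∞), and suppose there exist α₁ > 0 and a constant C̃ ∈ (0,2) such that t ↦ −t·S'(t) is integrable on (0, α₁] and S''(α)/(−S'(α)) ≤ C̃/α for all α ∈ (0, α₁]. Then there exists a constant C_S > 0 such that (1/α)·∫₀^α S(t) dt ≤ C_S·S(α) for all α ∈ (0, α₁]. -/
/-!
Fix `p := max C̃ (3/2) ∈ (1, 2)`. The ratio condition says that `h(t) := -S'(t) tᵖ` is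
nondecreasing on `(0, α₁]`, and `S(x) - S(y) = ∫ₓʸ h(u) u⁻ᵖ du` is then squeezed between
`h(x)` and `h(y)` times `∫ₓʸ u⁻ᵖ du`. Bounding `h` above by `h(α)` and integrating over
`(0, α]` gives `∫₀^α S ≤ α S(α) + α² (-S'(α)) / (2 - p)`. Bounding `h` below by `h(β)` on
`[β, 2β]` gives `-β S'(β) ≤ K S(β)` for `β ≤ α₁/2`; for `β ∈ (α₁/2, α₁]` the same bound
follows from `h(β) ≤ h(α₁)` and `S(β) ≥ S(α₁)`.
-/

open Set Filter MeasureTheory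

lemma monotoneOn_mul_rpow_of_neg_le_mul_deriv {g g' : ℝ → ℝ} {a p : ℝ}
    (hg : ∀ t ∈ Ioc 0 a, HasDerivAt g (g' t) t) (hg' : ∀ t ∈ Ioc 0 a, -(p * g t) ≤ t * g' t) :
    MonotoneOn (fun t => g t * t ^ p) (Ioc 0 a) := by
  have hderiv : ∀ t ∈ Ioc 0 a, HasDerivAt (fun t => g t * t ^ p)
      (g' t * t ^ p + g t * (p * t ^ (p - 1))) t := fun t ht =>
    (hg t ht).mul (Real.hasDerivAt_rpow_const (Or.inl ht.1.ne'))
  refine monotoneOn_of_hasDerivWithinAt_nonneg (convex_Ioc 0 a)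
    (fun t ht => (hderiv t ht).continuousAt.continuousWithinAt)
    (fun t ht => (hderiv t (Ioo_subset_Ioc_self (by simpa using ht))).hasDerivWithinAt)
    (fun t ht => ?_)
  rw [interior_Ioc] at ht
  have ht0 : 0 < t := ht.1
  calc (0 : ℝ) ≤ t ^ (p - 1) * (t * g' t + p * g t) :=
        mul_nonneg (Real.rpow_nonneg ht0.le _) (by linarith [hg' t (Ioo_subset_Ioc_self ht)])
    _ = g' t * t ^ p + g t * (p * t ^ (p - 1)) := by
        rw [Real.rpow_sub_one ht0.ne']; field_simp

lemma intervalIntegral_le_of_le_add_mul_rpow {f : ℝ → ℝ} {α A B r : ℝ} (hα : 0 ≤ α)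
    (hr : -1 < r) (hf : ContinuousOn f (Ioc 0 α)) (hf0 : ∀ t ∈ Ioc 0 α, 0 ≤ f t)
    (hle : ∀ t ∈ Ioc 0 α, f t ≤ A + B * t ^ r) :
    ∫ t in 0..α, f t ≤ α * A + B * (α ^ (r + 1) / (r + 1)) := by
  have hbound : IntervalIntegrable (fun t : ℝ => A + B * t ^ r) volume 0 α :=
    intervalIntegrable_const.add ((intervalIntegral.intervalIntegrable_rpow' hr).const_mul B)
  have hboundOn := (intervalIntegrable_iff_integrableOn_Ioc_of_le hα).1 hbound
  have hfint : IntegrableOn f (Ioc 0 α) := by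
    refine hboundOn.mono' (hf.aestronglyMeasurable measurableSet_Ioc) ?_
    refine (ae_restrict_iff' measurableSet_Ioc).2 (.of_forall fun t ht => ?_)
    rw [Real.norm_eq_abs, abs_of_nonneg (hf0 t ht)]
    exact hle t ht
  calc ∫ t in 0..α, f t ≤ ∫ t in 0..α, (A + B * t ^ r) := by
        rw [intervalIntegral.integral_of_le hα, intervalIntegral.integral_of_le hα]
        exact setIntegral_mono_on hfint hboundOn measurableSet_Ioc hle
    _ = α * A + B * (α ^ (r + 1) / (r + 1)) := by
        rw [intervalIntegral.integral_add intervalIntegrable_const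
          ((intervalIntegral.intervalIntegrable_rpow' hr).const_mul B),
          intervalIntegral.integral_const, intervalIntegral.integral_const_mul,
          integral_rpow (Or.inl hr), Real.zero_rpow (by linarith)]
        simp

section

variable {S S' : ℝ → ℝ} {p : ℝ}

lemma sub_le_mul_of_neg_deriv_mul_rpow_le {c x y : ℝ} (hp : p ≠ 1)
    (hx : 0 < x) (hxy : x ≤ y) (hS : ∀ u ∈ Icc x y, HasDerivAt S (S' u) u)
    (hc : ∀ u ∈ Ioo x y, -S' u * u ^ p ≤ c) :
    S x - S y ≤ c * ((x ^ (1 - p) - y ^ (1 - p)) / (p - 1)) := by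
  have hp' : p - 1 ≠ 0 := sub_ne_zero.2 hp
  -- `u ↦ S u - c u^(1-p) / (p-1)` has derivative `S' u + c u^(-p) ≥ 0`.
  have hderiv : ∀ u ∈ Icc x y, HasDerivAt (fun u => S u - c / (p - 1) * u ^ (1 - p))
      (S' u - c / (p - 1) * ((1 - p) * u ^ (1 - p - 1))) u := fun u hu =>
    (hS u hu).sub ((Real.hasDerivAt_rpow_const (Or.inl (hx.trans_le hu.1).ne')).const_mul _)
  have hmono : MonotoneOn (fun u => S u - c / (p - 1) * u ^ (1 - p)) (Icc x y) := by
    refine monotoneOn_of_hasDerivWithinAt_nonneg (convex_Icc x y)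
      (fun u hu => (hderiv u hu).continuousAt.continuousWithinAt)
      (fun u hu => (hderiv u (Ioo_subset_Icc_self (by simpa using hu))).hasDerivWithinAt)
      (fun u hu => ?_)
    rw [interior_Icc] at hu
    have hu0 : 0 < u := hx.trans hu.1
    have hcancel : u ^ p * u ^ (1 - p - 1) = 1 := by
      rw [← Real.rpow_add hu0]; norm_num
    have key : -S' u ≤ c * u ^ (1 - p - 1) := by
      calc -S' u = (-S' u * u ^ p) * u ^ (1 - p - 1) := by rw [mul_assoc, hcancel, mul_one]
        _ ≤ c * u ^ (1 - p - 1) :=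
          mul_le_mul_of_nonneg_right (hc u hu) (Real.rpow_nonneg hu0.le _)
    have : c / (p - 1) * ((1 - p) * u ^ (1 - p - 1)) = -(c * u ^ (1 - p - 1)) := by
      field_simp; ring
    linarith
  have hxy' := hmono ⟨le_rfl, hxy⟩ ⟨hxy, le_rfl⟩ hxy
  simp only at hxy'
  have e : c * ((x ^ (1 - p) - y ^ (1 - p)) / (p - 1)) =
      c / (p - 1) * x ^ (1 - p) - c / (p - 1) * y ^ (1 - p) := by ring
  linarith

lemma mul_le_sub_of_le_neg_deriv_mul_rpow {c x y : ℝ} (hp : p ≠ 1)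
    (hx : 0 < x) (hxy : x ≤ y) (hS : ∀ u ∈ Icc x y, HasDerivAt S (S' u) u)
    (hc : ∀ u ∈ Ioo x y, c ≤ -S' u * u ^ p) :
    c * ((x ^ (1 - p) - y ^ (1 - p)) / (p - 1)) ≤ S x - S y := by
  have hneg := sub_le_mul_of_neg_deriv_mul_rpow_le (S := -S) (S' := -S') (c := -c) hp hx hxy
    (fun u hu => (hS u hu).neg)
    (fun u hu => by simp only [Pi.neg_apply, neg_neg]; linarith [hc u hu])
  simp only [Pi.neg_apply] at hneg
  linarith

lemma intervalIntegral_le_of_monotoneOn_neg_deriv_mul_rpow {α : ℝ} (hp₁ : 1 < p) (hp₂ : p < 2)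
    (hα : 0 < α) (hS : ∀ t ∈ Ioc 0 α, HasDerivAt S (S' t) t) (hS0 : ∀ t ∈ Ioc 0 α, 0 ≤ S t)
    (hmono : MonotoneOn (fun t => -S' t * t ^ p) (Ioc 0 α)) :
    ∫ t in 0..α, S t ≤ α * S α + -S' α * α * α / (2 - p) := by
  set c := -S' α * α ^ p
  have hpoint : ∀ t ∈ Ioc 0 α,
      S t ≤ (S α - c / (p - 1) * α ^ (1 - p)) + c / (p - 1) * t ^ (1 - p) := by
    intro t ht
    have hdrop := sub_le_mul_of_neg_deriv_mul_rpow_le hp₁.ne' ht.1 ht.2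
      (fun u hu => hS u ⟨ht.1.trans_le hu.1, hu.2⟩)
      (fun u hu => hmono ⟨ht.1.trans hu.1, hu.2.le⟩ ⟨hα, le_rfl⟩ hu.2.le)
    have e : c * ((t ^ (1 - p) - α ^ (1 - p)) / (p - 1)) =
        c / (p - 1) * t ^ (1 - p) - c / (p - 1) * α ^ (1 - p) := by ring
    linarith
  have hint := intervalIntegral_le_of_le_add_mul_rpow hα.le (by linarith)
    (fun t ht => (hS t ht).continuousAt.continuousWithinAt) hS0 hpoint
  have hpow₁ : α ^ (1 - p + 1) = α ^ (1 - p) * α := Real.rpow_add_one hα.ne' _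
  have hpow₂ : α ^ p * α ^ (1 - p) = α := by
    rw [← Real.rpow_add hα]; norm_num
  have hp₁' : p - 1 ≠ 0 := by linarith
  have hp₂' : 2 - p ≠ 0 := by linarith
  have hc : c * α ^ (1 - p) = -S' α * α := by rw [mul_assoc, hpow₂]
  clear_value c
  convert hint using 1
  rw [hpow₁, show 1 - p + 1 = 2 - p by ring]
  field_simp
  linear_combination (1 - p) * hc

lemma neg_deriv_mul_le_of_monotoneOn_Icc_two_mul {β : ℝ} (hp : 1 < p) (hβ : 0 < β)
    (hS : ∀ u ∈ Icc β (2 * β), HasDerivAt S (S' u) u) (hS0 : 0 ≤ S (2 * β))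
    (hmono : MonotoneOn (fun t => -S' t * t ^ p) (Icc β (2 * β))) :
    -S' β * β ≤ (p - 1) / (1 - 2 ^ (1 - p)) * S β := by
  have hβ₂ : β ≤ 2 * β := by linarith
  have hdrop := mul_le_sub_of_le_neg_deriv_mul_rpow (c := -S' β * β ^ p) hp.ne' hβ hβ₂ hS
    (fun u hu => hmono ⟨le_rfl, hβ₂⟩ (Ioo_subset_Icc_self hu) hu.1.le)
  have hgap : 0 < 1 - (2 : ℝ) ^ (1 - p) := by
    linarith [Real.rpow_lt_one_of_one_lt_of_neg one_lt_two (by linarith : 1 - p < 0)]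
  have hpow : β ^ p * β ^ (1 - p) = β := by
    rw [← Real.rpow_add hβ]; norm_num
  have e : -S' β * β ^ p * ((β ^ (1 - p) - (2 * β) ^ (1 - p)) / (p - 1)) =
      -S' β * β * (1 - 2 ^ (1 - p)) / (p - 1) := by
    rw [Real.mul_rpow zero_le_two hβ.le]
    linear_combination (-S' β * (1 - 2 ^ (1 - p)) / (p - 1)) * hpow
  rw [e, div_le_iff₀ (by linarith)] at hdrop
  rw [div_mul_eq_mul_div, le_div_iff₀ hgap]
  nlinarith

lemma exists_neg_deriv_mul_le_mul {a : ℝ} (hp : 1 < p) (ha : 0 < a)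
    (hS : ∀ t ∈ Ioc 0 a, HasDerivAt S (S' t) t) (hS0 : ∀ t ∈ Ioc 0 a, 0 < S t)
    (hS' : ∀ t ∈ Ioc 0 a, S' t ≤ 0) (hmono : MonotoneOn (fun t => -S' t * t ^ p) (Ioc 0 a)) :
    ∃ K, 0 ≤ K ∧ ∀ β ∈ Ioc 0 a, -S' β * β ≤ K * S β := by
  have hanti : AntitoneOn S (Ioc 0 a) := by
    refine antitoneOn_of_hasDerivWithinAt_nonpos (convex_Ioc 0 a)
      (fun t ht => (hS t ht).continuousAt.continuousWithinAt)
      (fun t ht => (hS t (Ioo_subset_Ioc_self (by simpa using ht))).hasDerivWithinAt)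
      (fun t ht => hS' t (Ioo_subset_Ioc_self (by simpa using ht)))
  have ha' : a ∈ Ioc 0 a := ⟨ha, le_rfl⟩
  set K₁ := (p - 1) / (1 - (2 : ℝ) ^ (1 - p))
  set K₂ := -S' a * a ^ p * (a / 2) ^ (1 - p) / S a
  have hK₂ : 0 ≤ K₂ := div_nonneg (mul_nonneg (mul_nonneg (by linarith [hS' a ha'])
    (Real.rpow_nonneg ha.le _)) (Real.rpow_nonneg (by linarith) _)) (hS0 a ha').le
  refine ⟨max K₁ K₂, le_max_of_le_right hK₂, fun β hβ => ?_⟩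
  have hSβ := (hS0 β hβ).le
  rcases le_or_gt (2 * β) a with hsmall | hlarge
  · have hsub : Icc β (2 * β) ⊆ Ioc 0 a := fun u hu => ⟨hβ.1.trans_le hu.1, hu.2.trans hsmall⟩
    calc -S' β * β ≤ K₁ * S β := neg_deriv_mul_le_of_monotoneOn_Icc_two_mul hp hβ.1
          (fun u hu => hS u (hsub hu)) (hS0 _ (hsub ⟨by linarith [hβ.1], le_rfl⟩)).le
          (hmono.mono hsub)
      _ ≤ max K₁ K₂ * S β := mul_le_mul_of_nonneg_right (le_max_left _ _) hSβ
  · have hpow : β ^ p * β ^ (1 - p) = β := by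
      rw [← Real.rpow_add hβ.1]; norm_num
    calc -S' β * β = -S' β * β ^ p * β ^ (1 - p) := by rw [mul_assoc, hpow]
      _ ≤ -S' a * a ^ p * (a / 2) ^ (1 - p) :=
          mul_le_mul (hmono hβ ha' hβ.2)
            (Real.rpow_le_rpow_of_nonpos (by linarith) (by linarith) (by linarith))
            (Real.rpow_nonneg hβ.1.le _)
            (mul_nonneg (by linarith [hS' a ha']) (Real.rpow_nonneg ha.le _))
      _ = K₂ * S a := (div_mul_cancel₀ _ (hS0 a ha').ne').symm
      _ ≤ K₂ * S β := mul_le_mul_of_nonneg_left (hanti hβ ha' hβ.2) hK₂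
      _ ≤ max K₁ K₂ * S β := mul_le_mul_of_nonneg_right (le_max_right _ _) hSβ

end

theorem stmt_11_general (S : ℝ → ℝ) (hS : ContDiffOn ℝ 2 S (Set.Ioi 0))
    (hSpos : ∀ t > (0:ℝ), 0 < S t) (hS' : ∀ t > (0:ℝ), deriv S t < 0)
    (α₁ : ℝ) (hα₁ : 0 < α₁) (Ct : ℝ) (hCt : Ct ∈ Set.Ioo (0:ℝ) 2)
    (hratio : ∀ α ∈ Set.Ioc (0:ℝ) α₁, deriv (deriv S) α / (-(deriv S α)) ≤ Ct / α) :
    ∃ CS > (0:ℝ), ∀ α ∈ Set.Ioc (0:ℝ) α₁,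
      (1 / α) * ∫ t in (0:ℝ)..α, S t ≤ CS * S α := by
  set p := max Ct (3 / 2)
  have hp₁ : 1 < p := lt_max_of_lt_right (by norm_num)
  have hp₂ : p < 2 := max_lt hCt.2 (by norm_num)
  have hderiv : ∀ t ∈ Ioc 0 α₁, HasDerivAt S (deriv S t) t := fun t ht =>
    ((hS.differentiableOn (by norm_num)).differentiableAt (Ioi_mem_nhds ht.1)).hasDerivAt
  have hderiv₂ : ∀ t ∈ Ioc 0 α₁, HasDerivAt (deriv S) (deriv (deriv S) t) t := fun t ht =>
    (((hS.deriv_of_isOpen isOpen_Ioi (m := 1) (by norm_num)).differentiableOn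
      (by norm_num)).differentiableAt (Ioi_mem_nhds ht.1)).hasDerivAt
  have hmono : MonotoneOn (fun t => -deriv S t * t ^ p) (Ioc 0 α₁) := by
    refine monotoneOn_mul_rpow_of_neg_le_mul_deriv (fun t ht => (hderiv₂ t ht).neg)
      fun t ht => ?_
    have hS't := neg_pos.2 (hS' t ht.1)
    have h := (div_le_div_iff₀ hS't ht.1).1 (hratio t ht)
    have := mul_le_mul_of_nonneg_right (le_max_left Ct (3 / 2)) hS't.le
    linarith
  obtain ⟨K, hK, hbound⟩ := exists_neg_deriv_mul_le_mul hp₁ hα₁ hderiv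
    (fun t ht => hSpos t ht.1) (fun t ht => (hS' t ht.1).le) hmono
  refine ⟨1 + K / (2 - p), by have := sub_pos.2 hp₂; positivity, fun α hα => ?_⟩
  have hint := intervalIntegral_le_of_monotoneOn_neg_deriv_mul_rpow hp₁ hp₂ hα.1
    (fun t ht => hderiv t ⟨ht.1, ht.2.trans hα.2⟩) (fun t ht => (hSpos t ht.1).le)
    (hmono.mono (Ioc_subset_Ioc_right hα.2))
  have hαK : -deriv S α * α * α ≤ K * S α * α :=
    mul_le_mul_of_nonneg_right (hbound α hα) hα.1.le
  rw [one_div, inv_mul_le_iff₀ hα.1]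
  calc ∫ t in (0:ℝ)..α, S t ≤ α * S α + -deriv S α * α * α / (2 - p) := hint
    _ ≤ α * S α + K * S α * α / (2 - p) := by gcongr
    _ = α * ((1 + K / (2 - p)) * S α) := by field_simp

/-- Sufficient condition for the averaged-integral bound on the surrogate function `S`:
if `S''/(-S') ≤ C̃/α` on `(0, α₁]` with `C̃ ∈ (0,2)` and `-t S'(t)` is integrable there,
then `(1/α) ∫₀^α S ≤ C_S S(α)` on `(0, α₁]`. -/
theorem stmt_11 (S : ℝ → ℝ) (hS : ContDiffOn ℝ 2 S (Set.Ioi 0))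
    (hSpos : ∀ t > (0:ℝ), 0 < S t) (hS' : ∀ t > (0:ℝ), deriv S t < 0)
    (α₁ : ℝ) (hα₁ : 0 < α₁) (Ct : ℝ) (hCt : Ct ∈ Set.Ioo (0:ℝ) 2)
    (hint : MeasureTheory.IntegrableOn (fun t => -t * deriv S t) (Set.Ioc 0 α₁))
    (hratio : ∀ α ∈ Set.Ioc (0:ℝ) α₁, deriv (deriv S) α / (-(deriv S α)) ≤ Ct / α)
    (hlim : Tendsto (fun α => α * S α) (nhdsWithin 0 (Set.Ioi 0)) (nhds 0)) :
    ∃ CS > (0:ℝ), ∀ α ∈ Set.Ioc (0:ℝ) α₁,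
      (1 / α) * ∫ t in (0:ℝ)..α, S t ≤ CS * S α :=
  stmt_11_general S hS hSpos hS' α₁ hα₁ Ct hCt hratio
end

section
/- Let q: [0, λ₁] → ℝ≥0 satisfy α·q(λ) ≤ C' and λ·q(λ) ≤ C'' for all λ ∈ [0, λ₁] (for fixed α > 0 and constants C', C'' > 0), and let Σ: (0,∞) → ℝ≥0 be non-increasing and right-continuous with Σ(t) = 0 for t > λ₁ and ∫₀^{λ₁} Σ(t) dt < ∞. Then −∫₀^∞ t·q(t)² dΣ(t) ≤ (max{C',C''})²·(1/α²)·∫₀^α Σ(t) dt. -/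
/-!
Since `μ = -dΣ` lives on `(0, λ₁]`, it suffices to bound `t q(t)²` there. From `α q ≤ C'` and
`t q ≤ C''` one gets `t q(t)² ≤ (M/α)² min(t, α)` with `M = max C' C''` (use `q ≤ M/α` twice when
`t ≤ α`, and `t q ≤ M`, `q ≤ M/α` when `t ≥ α`). Integrating by parts, i.e. by the layer-cake
formula, `∫ min(t, α) dμ(t) = ∫₀^α μ(s, ∞) ds`, and `μ(s, ∞) = Σ(s) - Σ(λ₁) ≤ Σ(s)`.
-/

open MeasureTheory Set

theorem integral_le_of_lintegral_ofReal_le {X : Type*} [MeasurableSpace X] {μ : Measure X}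
    {f : X → ℝ} {B : ℝ} (hB : 0 ≤ B) (h : ∫⁻ x, ENNReal.ofReal (f x) ∂μ ≤ ENNReal.ofReal B) :
    ∫ x, f x ∂μ ≤ B := by
  by_cases hf : Integrable f μ
  · rw [integral_eq_lintegral_pos_part_sub_lintegral_neg_part hf]
    exact (sub_le_self _ ENNReal.toReal_nonneg).trans (ENNReal.toReal_le_of_le_ofReal hB h)
  · rw [integral_undef hf]
    exact hB

theorem ae_mem_Ioc_of_measure_Iic_eq_zero {μ : Measure ℝ} {a b : ℝ} (ha : μ (Iic a) = 0)
    (hb : μ (Ioi b) = 0) : ∀ᵐ t ∂μ, t ∈ Ioc a b := by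
  have hcompl : (Ioc a b)ᶜ ⊆ Iic a ∪ Ioi b := fun t ht => by
    simp only [mem_compl_iff, mem_Ioc, not_and_or, not_lt, not_le] at ht
    exact ht
  exact measure_mono_null hcompl (measure_union_null ha hb)

theorem mul_sq_le_div_sq_mul_min {t x α M : ℝ} (ht : 0 ≤ t) (hx : 0 ≤ x) (hα : 0 < α)
    (hαx : α * x ≤ M) (htx : t * x ≤ M) : t * x ^ 2 ≤ (M / α) ^ 2 * min t α := by
  have hxM : x ≤ M / α := by rwa [le_div_iff₀' hα]
  rcases le_total t α with htα | hαt
  · calc t * x ^ 2 ≤ t * (M / α) ^ 2 := by gcongr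
      _ = (M / α) ^ 2 * min t α := by rw [min_eq_left htα, mul_comm]
  · calc t * x ^ 2 = (t * x) * x := by ring
      _ ≤ M * (M / α) := mul_le_mul htx hxM hx ((mul_nonneg ht hx).trans htx)
      _ = (M / α) ^ 2 * min t α := by rw [min_eq_right hαt]; field_simp

theorem lintegral_ofReal_min_eq_setLIntegral_measure_Ioi {μ : Measure ℝ} (hμ : μ (Iic 0) = 0)
    {α : ℝ} (hα : 0 ≤ α) :
    ∫⁻ t, ENNReal.ofReal (min t α) ∂μ = ∫⁻ s in Ioo 0 α, μ (Ioi s) := by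
  have hnonneg : 0 ≤ᵐ[μ] fun t => min t α := by
    filter_upwards [measure_eq_zero_iff_ae_notMem.mp hμ] with t ht
    exact le_min (not_le.mp ht).le hα
  have hlevel : ∀ s, μ {t | s < min t α} = (Iio α).indicator (fun s => μ (Ioi s)) s := by
    intro s
    by_cases hs : s < α
    · simp [hs, Ioi]
    · simp [hs]
  rw [lintegral_eq_lintegral_meas_lt μ hnonneg (by fun_prop)]
  simp_rw [hlevel]
  rw [lintegral_indicator measurableSet_Iio, Measure.restrict_restrict measurableSet_Iio,
    Iio_inter_Ioi]

theorem integrableOn_Ioc_of_eq_zero_of_gt {f : ℝ → ℝ} {a b : ℝ} (hf : IntegrableOn f (Ioc a b))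
    (hzero : ∀ t > b, f t = 0) (c : ℝ) : IntegrableOn f (Ioc a c) := by
  have hIoi : IntegrableOn f (Ioi b) :=
    integrableOn_zero.congr_fun (fun t ht => (hzero t ht).symm) measurableSet_Ioi
  refine (hf.union hIoi).mono_set fun t ht => ?_
  rcases le_or_gt t b with htb | hbt
  · exact Or.inl ⟨ht.1, htb⟩
  · exact Or.inr hbt

section CountingFunction

variable {μ : Measure ℝ} {Sig : ℝ → ℝ} {lam1 : ℝ}

theorem measure_Ioi_le_ofReal (hSig : ∀ t > 0, 0 ≤ Sig t)
    (hμ : ∀ s t : ℝ, 0 < s → s ≤ t → μ (Ioc s t) = ENNReal.ofReal (Sig s - Sig t))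
    (hlam1 : μ (Ioi lam1) = 0) {s : ℝ} (hs : 0 < s) : μ (Ioi s) ≤ ENNReal.ofReal (Sig s) := by
  rcases le_or_gt s lam1 with hs1 | hs1
  · calc μ (Ioi s) = μ (Ioc s lam1 ∪ Ioi lam1) := by rw [Ioc_union_Ioi_eq_Ioi hs1]
      _ ≤ μ (Ioc s lam1) + μ (Ioi lam1) := measure_union_le _ _
      _ = ENNReal.ofReal (Sig s - Sig lam1) := by rw [hlam1, add_zero, hμ s lam1 hs hs1]
      _ ≤ ENNReal.ofReal (Sig s) := by
        gcongr
        linarith [hSig lam1 (hs.trans_le hs1)]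
  · rw [measure_mono_null (Ioi_subset_Ioi hs1.le) hlam1]
    exact zero_le

theorem lintegral_ofReal_min_le_intervalIntegral (hSig : ∀ t > 0, 0 ≤ Sig t)
    (hSig0 : ∀ t > lam1, Sig t = 0) (hSigint : IntegrableOn Sig (Ioc 0 lam1))
    (hμ : ∀ s t : ℝ, 0 < s → s ≤ t → μ (Ioc s t) = ENNReal.ofReal (Sig s - Sig t))
    (hμsupp : μ (Iic 0) = 0 ∧ μ (Ioi lam1) = 0) {α : ℝ} (hα : 0 ≤ α) :
    ∫⁻ t, ENNReal.ofReal (min t α) ∂μ ≤ ENNReal.ofReal (∫ s in 0..α, Sig s) := by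
  have hint : IntegrableOn Sig (Ioo 0 α) :=
    (integrableOn_Ioc_of_eq_zero_of_gt hSigint hSig0 α).mono_set Ioo_subset_Ioc_self
  have hnonneg : 0 ≤ᵐ[volume.restrict (Ioo 0 α)] Sig :=
    (ae_restrict_iff' measurableSet_Ioo).mpr (ae_of_all _ fun t ht => hSig t ht.1)
  calc ∫⁻ t, ENNReal.ofReal (min t α) ∂μ = ∫⁻ s in Ioo 0 α, μ (Ioi s) :=
        lintegral_ofReal_min_eq_setLIntegral_measure_Ioi hμsupp.1 hα
    _ ≤ ∫⁻ s in Ioo 0 α, ENNReal.ofReal (Sig s) :=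
        setLIntegral_mono' measurableSet_Ioo fun s hs => measure_Ioi_le_ofReal hSig hμ hμsupp.2 hs.1
    _ = ENNReal.ofReal (∫ s in 0..α, Sig s) := by
        rw [intervalIntegral.integral_of_le hα, integral_Ioc_eq_integral_Ioo,
          ofReal_integral_eq_lintegral_ofReal hint hnonneg]

end CountingFunction

theorem stmt_15_general (lam1 α C' C'' : ℝ) (hα : 0 < α)
    (q : ℝ → ℝ) (hq0 : ∀ l ∈ Set.Icc (0:ℝ) lam1, 0 ≤ q l)
    (hq1 : ∀ l ∈ Set.Icc (0:ℝ) lam1, α * q l ≤ C')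
    (hq2 : ∀ l ∈ Set.Icc (0:ℝ) lam1, l * q l ≤ C'')
    (Sig : ℝ → ℝ) (hSignonneg : ∀ t > (0:ℝ), 0 ≤ Sig t)
    (hSig0 : ∀ t > lam1, Sig t = 0)
    (hSigint : IntegrableOn Sig (Set.Ioc 0 lam1))
    (μ : Measure ℝ)
    (hμ : ∀ s t : ℝ, 0 < s → s ≤ t → μ (Set.Ioc s t) = ENNReal.ofReal (Sig s - Sig t))
    (hμsupp : μ (Set.Iic 0) = 0 ∧ μ (Set.Ioi lam1) = 0) :
    ∫ t, t * (q t) ^ 2 ∂μ ≤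
      (max C' C'') ^ 2 * (1 / α ^ 2) * ∫ t in (0:ℝ)..α, Sig t := by
  set M := max C' C''
  have hpointwise : ∀ᵐ t ∂μ, t * q t ^ 2 ≤ (M / α) ^ 2 * min t α := by
    filter_upwards [ae_mem_Ioc_of_measure_Iic_eq_zero hμsupp.1 hμsupp.2] with t ht
    have ht' : t ∈ Icc 0 lam1 := Ioc_subset_Icc_self ht
    exact mul_sq_le_div_sq_mul_min ht.1.le (hq0 t ht') hα ((hq1 t ht').trans (le_max_left _ _))
      ((hq2 t ht').trans (le_max_right _ _))
  have hSig_int_nonneg : 0 ≤ ∫ t in (0:ℝ)..α, Sig t := by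
    rw [intervalIntegral.integral_of_le hα.le]
    exact setIntegral_nonneg measurableSet_Ioc fun t ht => hSignonneg t ht.1
  have hRHS : M ^ 2 * (1 / α ^ 2) * ∫ t in (0:ℝ)..α, Sig t
      = (M / α) ^ 2 * ∫ t in (0:ℝ)..α, Sig t := by ring
  rw [hRHS]
  refine integral_le_of_lintegral_ofReal_le (by positivity) ?_
  calc ∫⁻ t, ENNReal.ofReal (t * q t ^ 2) ∂μ
      ≤ ∫⁻ t, ENNReal.ofReal ((M / α) ^ 2) * ENNReal.ofReal (min t α) ∂μ := by
        refine lintegral_mono_ae (hpointwise.mono fun t ht => ?_)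
        rw [← ENNReal.ofReal_mul (by positivity)]
        exact ENNReal.ofReal_le_ofReal ht
    _ = ENNReal.ofReal ((M / α) ^ 2) * ∫⁻ t, ENNReal.ofReal (min t α) ∂μ :=
        lintegral_const_mul' _ _ ENNReal.ofReal_ne_top
    _ ≤ ENNReal.ofReal ((M / α) ^ 2) * ENNReal.ofReal (∫ t in (0:ℝ)..α, Sig t) := by
        gcongr
        exact lintegral_ofReal_min_le_intervalIntegral hSignonneg hSig0 hSigint hμ hμsupp hα.le
    _ = ENNReal.ofReal ((M / α) ^ 2 * ∫ t in (0:ℝ)..α, Sig t) :=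
        (ENNReal.ofReal_mul (by positivity)).symm

/-- Integration-by-parts estimate from the Comparison Lemma:
`-∫ t q(t)² dSig(t) ≤ (max{C',C''})² (1/α²) ∫₀^α Sig(t) dt`, where `μ = -dSig` is the
point-mass measure of the eigenvalues with counting function `Sig`. -/
theorem stmt_15 (lam1 α C' C'' : ℝ) (hlam1 : 0 < lam1) (hα : 0 < α)
    (hC' : 0 < C') (hC'' : 0 < C'')
    (q : ℝ → ℝ) (hq0 : ∀ l ∈ Set.Icc (0:ℝ) lam1, 0 ≤ q l)
    (hq1 : ∀ l ∈ Set.Icc (0:ℝ) lam1, α * q l ≤ C')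
    (hq2 : ∀ l ∈ Set.Icc (0:ℝ) lam1, l * q l ≤ C'')
    (Sig : ℝ → ℝ) (hSignonneg : ∀ t > (0:ℝ), 0 ≤ Sig t)
    (hSiganti : AntitoneOn Sig (Set.Ioi 0))
    (hSigrc : ∀ t > (0:ℝ), ContinuousWithinAt Sig (Set.Ici t) t)
    (hSig0 : ∀ t > lam1, Sig t = 0)
    (hSigint : IntegrableOn Sig (Set.Ioc 0 lam1))
    (μ : Measure ℝ)
    (hμ : ∀ s t : ℝ, 0 < s → s ≤ t → μ (Set.Ioc s t) = ENNReal.ofReal (Sig s - Sig t))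
    (hμsupp : μ (Set.Iic 0) = 0 ∧ μ (Set.Ioi lam1) = 0) :
    ∫ t, t * (q t) ^ 2 ∂μ ≤
      (max C' C'') ^ 2 * (1 / α ^ 2) * ∫ t in (0:ℝ)..α, Sig t :=
  stmt_15_general lam1 α C' C'' hα q hq0 hq1 hq2 Sig hSignonneg hSig0 hSigint μ hμ hμsupp
end
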